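/- arXiv:2605.08866 — 5 statements merged into one kernel-verified Lean document; each statement's English description precedes it below -/
import Mathlib

section
/- Fix a real number β ∈ (0,1) and integers d ≥ 1 and T ≥ 1 with T ≥ 2(d + log(1/β)). Set ε := (2/T)(d + log(1/β)) (so that ε ∈ (0,1]). Then the binomial lower tail satisfies Φ(d,T,ε) = Σ_{i=0}^{d-1} C(T,i) ε^i (1−ε)^{T−i} ≤ β. -/
/-!
Halving the success probability costs at most a factor `2 ^ i ≤ 2 ^ (d - 1)` on the `i`-th term
of the lower tail, and the halved terms are part of the binomial expansion of
`(ε / 2 + (1 - ε)) ^ T = (1 - ε / 2) ^ T ≤ exp (-ε T / 2)`. The choice of `ε` makes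
`ε T / 2 = d + log (1 / β)`, so the tail is at most `2 ^ (d - 1) e ^ (-d) β ≤ β`.
-/

open Finset Real

lemma sum_range_mul_pow_mul_choose_le_add_pow {x y : ℝ} (hx : 0 ≤ x) (hy : 0 ≤ y) (d T : ℕ) :
    ∑ i ∈ range d, x ^ i * y ^ (T - i) * T.choose i ≤ (x + y) ^ T := by
  have hnonneg : ∀ i, 0 ≤ x ^ i * y ^ (T - i) * T.choose i := fun i => by positivity
  calc ∑ i ∈ range d, x ^ i * y ^ (T - i) * T.choose i
      ≤ ∑ i ∈ range (max d (T + 1)), x ^ i * y ^ (T - i) * T.choose i :=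
        sum_le_sum_of_subset_of_nonneg (range_subset_range.mpr (le_max_left _ _))
          fun i _ _ => hnonneg i
    _ = ∑ i ∈ range (T + 1), x ^ i * y ^ (T - i) * T.choose i := by
        refine (sum_subset (range_subset_range.mpr (le_max_right _ _)) fun i _ hi => ?_).symm
        rw [Nat.choose_eq_zero_of_lt (by simpa using hi), Nat.cast_zero, mul_zero]
    _ = (x + y) ^ T := (add_pow x y T).symm

lemma sum_range_choose_mul_pow_le_two_pow_mul_exp {p : ℝ} (hp0 : 0 ≤ p) (hp1 : p ≤ 1)
    (d T : ℕ) :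
    ∑ i ∈ range d, (T.choose i : ℝ) * p ^ i * (1 - p) ^ (T - i)
      ≤ 2 ^ (d - 1) * exp (-(p * T / 2)) := by
  have hterm : ∀ i ∈ range d, (T.choose i : ℝ) * p ^ i * (1 - p) ^ (T - i)
      ≤ 2 ^ (d - 1) * ((p / 2) ^ i * (1 - p) ^ (T - i) * T.choose i) := by
    intro i hi
    have h2pow : (2 : ℝ) ^ i ≤ 2 ^ (d - 1) :=
      pow_le_pow_right₀ one_le_two (Nat.le_sub_one_of_lt (mem_range.mp hi))
    calc (T.choose i : ℝ) * p ^ i * (1 - p) ^ (T - i)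
        = 2 ^ i * ((p / 2) ^ i * (1 - p) ^ (T - i) * T.choose i) := by
          rw [div_pow]; field_simp
      _ ≤ 2 ^ (d - 1) * ((p / 2) ^ i * (1 - p) ^ (T - i) * T.choose i) := by
          gcongr
  calc ∑ i ∈ range d, (T.choose i : ℝ) * p ^ i * (1 - p) ^ (T - i)
      ≤ 2 ^ (d - 1) * ∑ i ∈ range d, (p / 2) ^ i * (1 - p) ^ (T - i) * T.choose i := by
        rw [mul_sum]; exact sum_le_sum hterm
    _ ≤ 2 ^ (d - 1) * (p / 2 + (1 - p)) ^ T := by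
        gcongr
        exact sum_range_mul_pow_mul_choose_le_add_pow (by linarith) (by linarith) d T
    _ ≤ 2 ^ (d - 1) * exp (-(p / 2)) ^ T := by
        gcongr
        linarith [one_sub_le_exp_neg (p / 2)]
    _ = 2 ^ (d - 1) * exp (-(p * T / 2)) := by
        rw [← exp_nat_mul]; ring_nf

lemma two_pow_sub_one_le_exp (d : ℕ) : (2 : ℝ) ^ (d - 1) ≤ exp d :=
  calc (2 : ℝ) ^ (d - 1) ≤ 2 ^ d := pow_le_pow_right₀ one_le_two (Nat.sub_le d 1)
    _ ≤ exp 1 ^ d := by gcongr; linarith [add_one_le_exp 1]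
    _ = exp d := by rw [← exp_nat_mul, mul_one]

theorem binomial_tail_le_beta_general (β : ℝ) (hβ0 : 0 < β) (hβ1 : β < 1)
    (d T : ℕ)
    (hTd : 2 * ((d : ℝ) + Real.log (1 / β)) ≤ (T : ℝ)) :
    (let ε : ℝ := (2 / (T : ℝ)) * ((d : ℝ) + Real.log (1 / β));
      ∑ i ∈ Finset.range d,
        (T.choose i : ℝ) * ε ^ i * (1 - ε) ^ (T - i)) ≤ β := by
  dsimp only
  set ε := 2 / (T : ℝ) * (d + log (1 / β)) with hε
  have hL : 0 < log (1 / β) := log_pos (one_lt_one_div hβ0 hβ1)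
  have hT : (0 : ℝ) < T := by linarith [d.cast_nonneg (α := ℝ)]
  have hεT : ε * T / 2 = d + log (1 / β) := by rw [hε]; field_simp
  have hε0 : 0 ≤ ε := by positivity
  have hε1 : ε ≤ 1 := by rw [← mul_le_mul_iff_of_pos_right hT]; linarith
  have hexp : exp (-log (1 / β)) = β := by rw [one_div, log_inv, neg_neg, exp_log hβ0]
  calc ∑ i ∈ range d, (T.choose i : ℝ) * ε ^ i * (1 - ε) ^ (T - i)
      ≤ 2 ^ (d - 1) * exp (-(ε * T / 2)) :=
        sum_range_choose_mul_pow_le_two_pow_mul_exp hε0 hε1 d T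
    _ = 2 ^ (d - 1) * exp (-d) * β := by rw [hεT, neg_add, exp_add, hexp, mul_assoc]
    _ ≤ exp d * exp (-d) * β := by gcongr; exact two_pow_sub_one_le_exp d
    _ = β := by rw [← exp_add, add_neg_cancel, exp_zero, one_mul]

/-- Lemma `epsilon_T_order`: for `β ∈ (0,1)`, `d ≥ 1`, `T ≥ 1` with
`T ≥ 2(d + log(1/β))`, the choice `ε = (2/T)(d + log(1/β))` makes the binomial
lower tail `Σ_{i=0}^{d-1} C(T,i) ε^i (1-ε)^{T-i}` at most `β`. -/
theorem binomial_tail_le_beta (β : ℝ) (hβ0 : 0 < β) (hβ1 : β < 1)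
    (d T : ℕ) (hd : 1 ≤ d) (hT : 1 ≤ T)
    (hTd : 2 * ((d : ℝ) + Real.log (1 / β)) ≤ (T : ℝ)) :
    (let ε : ℝ := (2 / (T : ℝ)) * ((d : ℝ) + Real.log (1 / β));
      ∑ i ∈ Finset.range d,
        (T.choose i : ℝ) * ε ^ i * (1 - ε) ^ (T - i)) ≤ β :=
  binomial_tail_le_beta_general β hβ0 hβ1 d T hTd
end

section
/- Let (Ω, ℱ, P) be a probability space, d ≥ 1 an integer, δ : Ω → ℝ^d a measurable map, θ ∈ ℝ^d with θ ≠ 0, and let B > 0, λ > 0, ε ∈ [0,1]. Let M ∈ ℱ be an event. Assume: (i) ⟨θ, δ(ω)⟩ ≥ 0 for P-almost every ω; (ii) ‖δ(ω)‖₂ ≤ B for P-almost every ω; (iii) P(⟨θ, δ⟩ > 0) ≤ ε; and (iv) E[1_M · ⟨θ, δ⟩²] ≥ λ ‖θ‖₂² P(M). Then P(M) ≤ ε B² / λ. -/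
open MeasureTheory

/-!
Off the event `{0 < ⟪θ, δ⟫}` the nonnegative score `⟪θ, δ⟫` vanishes, and on it Cauchy–Schwarz
bounds its square by `‖θ‖² B²`. Hence `∫_M ⟪θ, δ⟫² ≤ ‖θ‖² B² P(0 < ⟪θ, δ⟫) ≤ ‖θ‖² B² ε`, and
comparing with the covariance-diversity lower bound `λ ‖θ‖² P(M)` and cancelling `‖θ‖² > 0`
gives `P(M) ≤ ε B² / λ`.
-/

lemma sq_le_indicator_pos_of_nonneg_of_le {Ω : Type*} {f : Ω → ℝ} {K : ℝ} {ω : Ω}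
    (h0 : 0 ≤ f ω) (hK : f ω ≤ K) :
    f ω ^ 2 ≤ {ω | 0 < f ω}.indicator (fun _ => K ^ 2) ω := by
  rcases h0.lt_or_eq with hpos | hzero
  · rw [Set.indicator_of_mem (show ω ∈ {ω | 0 < f ω} from hpos)]
    exact pow_le_pow_left₀ h0 hK 2
  · rw [← hzero, sq, zero_mul]
    exact Set.indicator_nonneg (fun _ _ => sq_nonneg K) ω

lemma setIntegral_sq_le_mul_measureReal_pos {Ω : Type*} [MeasurableSpace Ω] {μ : Measure Ω}
    [IsFiniteMeasure μ] {f : Ω → ℝ} (hf : Measurable f) {K : ℝ}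
    (h0 : ∀ᵐ ω ∂μ, 0 ≤ f ω) (hK : ∀ᵐ ω ∂μ, f ω ≤ K) (s : Set Ω) :
    ∫ ω in s, f ω ^ 2 ∂μ ≤ K ^ 2 * μ.real {ω | 0 < f ω} := by
  have hpos : MeasurableSet {ω | 0 < f ω} := measurableSet_lt measurable_const hf
  have hbound : ∀ᵐ ω ∂μ, f ω ^ 2 ≤ {ω | 0 < f ω}.indicator (fun _ => K ^ 2) ω := by
    filter_upwards [h0, hK] with ω h0ω hKω
    exact sq_le_indicator_pos_of_nonneg_of_le h0ω hKω
  have hint_ind : Integrable ({ω | 0 < f ω}.indicator fun _ => K ^ 2) μ :=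
    (integrable_const _).indicator hpos
  have hint_sq : Integrable (fun ω => f ω ^ 2) μ :=
    hint_ind.mono' (hf.pow_const 2).aestronglyMeasurable <| hbound.mono fun ω hω => by
      rwa [Real.norm_of_nonneg (sq_nonneg _)]
  calc ∫ ω in s, f ω ^ 2 ∂μ
      ≤ ∫ ω, f ω ^ 2 ∂μ :=
        setIntegral_le_integral hint_sq (Filter.Eventually.of_forall fun ω => sq_nonneg _)
    _ ≤ ∫ ω, {ω | 0 < f ω}.indicator (fun _ => K ^ 2) ω ∂μ :=
        integral_mono_ae hint_sq hint_ind hbound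
    _ = K ^ 2 * μ.real {ω | 0 < f ω} := by
        rw [integral_indicator_const _ hpos, smul_eq_mul, mul_comm]

theorem action_mismatch_le_of_covariance_diversity_general
    {Ω : Type*} [MeasurableSpace Ω] (P : Measure Ω) [IsProbabilityMeasure P]
    {d : ℕ}
    (δ : Ω → EuclideanSpace ℝ (Fin d)) (hδ : Measurable δ)
    (θ : EuclideanSpace ℝ (Fin d)) (hθ : θ ≠ 0)
    (B lam ε : ℝ) (hlam : 0 < lam)
    (M : Set Ω)
    (h1 : ∀ᵐ ω ∂P, 0 ≤ (inner ℝ θ (δ ω) : ℝ))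
    (h2 : ∀ᵐ ω ∂P, ‖δ ω‖ ≤ B)
    (h3 : (P {ω | 0 < (inner ℝ θ (δ ω) : ℝ)}).toReal ≤ ε)
    (h4 : lam * ‖θ‖ ^ 2 * (P M).toReal ≤ ∫ ω in M, (inner ℝ θ (δ ω) : ℝ) ^ 2 ∂P) :
    (P M).toReal ≤ ε * B ^ 2 / lam := by
  have hscore_le : ∀ᵐ ω ∂P, (inner ℝ θ (δ ω) : ℝ) ≤ ‖θ‖ * B := h2.mono fun ω hω =>
    (real_inner_le_norm θ (δ ω)).trans (mul_le_mul_of_nonneg_left hω (norm_nonneg θ))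
  have hθ_sq : 0 < ‖θ‖ ^ 2 := by positivity
  have hmain : ‖θ‖ ^ 2 * (lam * (P M).toReal) ≤ ‖θ‖ ^ 2 * (ε * B ^ 2) :=
    calc ‖θ‖ ^ 2 * (lam * (P M).toReal) = lam * ‖θ‖ ^ 2 * (P M).toReal := by ring
      _ ≤ ∫ ω in M, (inner ℝ θ (δ ω) : ℝ) ^ 2 ∂P := h4
      _ ≤ (‖θ‖ * B) ^ 2 * P.real {ω | 0 < (inner ℝ θ (δ ω) : ℝ)} :=
        setIntegral_sq_le_mul_measureReal_pos (measurable_const.inner hδ) h1 hscore_le M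
      _ ≤ (‖θ‖ * B) ^ 2 * ε := mul_le_mul_of_nonneg_left h3 (sq_nonneg _)
      _ = ‖θ‖ ^ 2 * (ε * B ^ 2) := by ring
  rw [le_div_iff₀ hlam, mul_comm]
  exact le_of_mul_le_mul_left hmain hθ_sq

/-- Measure-theoretic core of the action-level guarantee via covariance diversity:
if `⟪θ,δ⟫ ≥ 0` a.s., `‖δ‖ ≤ B` a.s., `P(⟪θ,δ⟫ > 0) ≤ ε`, and the conditional
covariance-diversity bound `E[1_M ⟪θ,δ⟫²] ≥ λ‖θ‖² P(M)` holds, then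
`P(M) ≤ ε B² / λ`. -/
theorem action_mismatch_le_of_covariance_diversity
    {Ω : Type*} [MeasurableSpace Ω] (P : Measure Ω) [IsProbabilityMeasure P]
    {d : ℕ} (hd : 1 ≤ d)
    (δ : Ω → EuclideanSpace ℝ (Fin d)) (hδ : Measurable δ)
    (θ : EuclideanSpace ℝ (Fin d)) (hθ : θ ≠ 0)
    (B lam ε : ℝ) (hB : 0 < B) (hlam : 0 < lam) (hε0 : 0 ≤ ε) (hε1 : ε ≤ 1)
    (M : Set Ω) (hM : MeasurableSet M)
    (h1 : ∀ᵐ ω ∂P, 0 ≤ (inner ℝ θ (δ ω) : ℝ))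
    (h2 : ∀ᵐ ω ∂P, ‖δ ω‖ ≤ B)
    (h3 : (P {ω | 0 < (inner ℝ θ (δ ω) : ℝ)}).toReal ≤ ε)
    (h4 : lam * ‖θ‖ ^ 2 * (P M).toReal ≤ ∫ ω in M, (inner ℝ θ (δ ω) : ℝ) ^ 2 ∂P) :
    (P M).toReal ≤ ε * B ^ 2 / lam :=
  action_mismatch_le_of_covariance_diversity_general P δ hδ θ hθ B lam ε hlam M h1 h2 h3 h4
end

section
/- Let (Ω, ℱ, P) be a probability space, d ≥ 1 an integer, δ : Ω → ℝ^d a measurable map, θ ∈ ℝ^d with θ ≠ 0, and let B > 0, λ > 0, γ ≥ 0, ε ∈ [0,1]. Let M ∈ ℱ be an event. Assume: (i) ⟨θ, δ(ω)⟩ ≥ 0 for P-almost every ω; (ii) ‖δ(ω)‖₂ ≤ B for P-almost every ω; (iii) P(⟨θ, δ⟩ > γ) ≤ ε; and (iv) E[1_M · ⟨θ, δ⟩²] ≥ λ ‖θ‖₂² P(M). Then P(M) ≤ ε B² / λ + γ² / (λ ‖θ‖₂²). -/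
/-!
Write `f = ⟪θ, δ⟫`. Almost surely `0 ≤ f ≤ ‖θ‖ B`, so `f² ≤ ‖θ‖² B² · 1{f > γ} + γ²`: above the slack
level `f²` is at most its a.s. bound, below it at most `γ²`. Integrating over `M` and using the
diversity lower bound gives `λ ‖θ‖² P(M) ≤ ‖θ‖² B² ε + γ² P(M) ≤ ‖θ‖² B² ε + γ²`; divide by `λ ‖θ‖²`.
-/

open MeasureTheory

lemma sq_le_indicator_add_sq {x K γ : ℝ} (hx : 0 ≤ x) (hxK : x ≤ K) :
    x ^ 2 ≤ {y : ℝ | γ < y}.indicator (fun _ => K ^ 2) x + γ ^ 2 := by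
  by_cases hγx : γ < x
  · rw [Set.indicator_of_mem (show x ∈ {y | γ < y} from hγx)]
    nlinarith [sq_nonneg γ]
  · rw [Set.indicator_of_notMem (show x ∉ {y | γ < y} from hγx)]
    nlinarith [le_of_not_gt hγx]

lemma setIntegral_sq_le_of_nonneg_of_le {Ω : Type*} [MeasurableSpace Ω] {μ : Measure Ω}
    [IsFiniteMeasure μ] {f : Ω → ℝ} (hf : Measurable f) {K γ : ℝ}
    (hf0 : ∀ᵐ ω ∂μ, 0 ≤ f ω) (hfK : ∀ᵐ ω ∂μ, f ω ≤ K) (s : Set Ω) :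
    ∫ ω in s, f ω ^ 2 ∂μ ≤ K ^ 2 * μ.real {ω | γ < f ω} + γ ^ 2 * μ.real s := by
  set A := {ω | γ < f ω}
  have hA : MeasurableSet A := measurableSet_lt measurable_const hf
  have hbound : ∀ᵐ ω ∂μ, f ω ^ 2 ≤ A.indicator (fun _ => K ^ 2) ω + γ ^ 2 := by
    filter_upwards [hf0, hfK] with ω h0 hK
    exact sq_le_indicator_add_sq (γ := γ) h0 hK
  have hf_sq : Integrable (fun ω => f ω ^ 2) μ := by
    refine (integrable_const (K ^ 2)).mono' (hf.pow_const 2).aestronglyMeasurable ?_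
    filter_upwards [hf0, hfK] with ω h0 hK
    rw [Real.norm_eq_abs, abs_pow, abs_of_nonneg h0]
    exact pow_le_pow_left₀ h0 hK 2
  have h_ind : Integrable (A.indicator fun _ => K ^ 2) μ := (integrable_const _).indicator hA
  calc ∫ ω in s, f ω ^ 2 ∂μ
      ≤ ∫ ω in s, (A.indicator (fun _ => K ^ 2) ω + γ ^ 2) ∂μ :=
        setIntegral_mono_ae hf_sq.integrableOn (h_ind.add (integrable_const _)).integrableOn
          hbound
    _ = K ^ 2 * μ.real (A ∩ s) + γ ^ 2 * μ.real s := by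
        rw [integral_add h_ind.integrableOn (integrable_const _), integral_indicator_const _ hA,
          setIntegral_const, Measure.real, Measure.real, Measure.restrict_apply hA, smul_eq_mul,
          smul_eq_mul, mul_comm, mul_comm _ (γ ^ 2)]
        rfl
    _ ≤ K ^ 2 * μ.real A + γ ^ 2 * μ.real s := by
        gcongr
        exacts [measure_ne_top _ _, Set.inter_subset_left]

theorem action_mismatch_le_of_covariance_diversity_slack_general
    {Ω : Type*} [MeasurableSpace Ω] (P : Measure Ω) [IsProbabilityMeasure P]
    {d : ℕ}
    (δ : Ω → EuclideanSpace ℝ (Fin d)) (hδ : Measurable δ)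
    (θ : EuclideanSpace ℝ (Fin d)) (hθ : θ ≠ 0)
    (B lam γ ε : ℝ) (hlam : 0 < lam)
    (M : Set Ω)
    (h1 : ∀ᵐ ω ∂P, 0 ≤ (inner ℝ θ (δ ω) : ℝ))
    (h2 : ∀ᵐ ω ∂P, ‖δ ω‖ ≤ B)
    (h3 : (P {ω | γ < (inner ℝ θ (δ ω) : ℝ)}).toReal ≤ ε)
    (h4 : lam * ‖θ‖ ^ 2 * (P M).toReal ≤ ∫ ω in M, (inner ℝ θ (δ ω) : ℝ) ^ 2 ∂P) :
    (P M).toReal ≤ ε * B ^ 2 / lam + γ ^ 2 / (lam * ‖θ‖ ^ 2) := by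
  have h_inner_le : ∀ᵐ ω ∂P, (inner ℝ θ (δ ω) : ℝ) ≤ ‖θ‖ * B := by
    filter_upwards [h2] with ω hω
    exact (real_inner_le_norm θ (δ ω)).trans (mul_le_mul_of_nonneg_left hω (norm_nonneg θ))
  have h_tail := setIntegral_sq_le_of_nonneg_of_le (γ := γ) (measurable_const.inner hδ) h1
    h_inner_le M
  have h_main : lam * ‖θ‖ ^ 2 * P.real M ≤ ε * B ^ 2 * ‖θ‖ ^ 2 + γ ^ 2 := by
    have h_tail_le : (‖θ‖ * B) ^ 2 * P.real {ω | γ < (inner ℝ θ (δ ω) : ℝ)} ≤ (‖θ‖ * B) ^ 2 * ε :=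
      mul_le_mul_of_nonneg_left h3 (sq_nonneg _)
    have h_slack_le : γ ^ 2 * P.real M ≤ γ ^ 2 :=
      mul_le_of_le_one_right (sq_nonneg γ) measureReal_le_one
    have h_diversity : lam * ‖θ‖ ^ 2 * P.real M ≤ ∫ ω in M, (inner ℝ θ (δ ω) : ℝ) ^ 2 ∂P := h4
    linarith [mul_pow ‖θ‖ B 2]
  have h_denom_pos : 0 < lam * ‖θ‖ ^ 2 := by positivity
  calc P.real M ≤ (ε * B ^ 2 * ‖θ‖ ^ 2 + γ ^ 2) / (lam * ‖θ‖ ^ 2) :=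
        (le_div_iff₀ h_denom_pos).2 (by linarith)
    _ = ε * B ^ 2 / lam + γ ^ 2 / (lam * ‖θ‖ ^ 2) := by field_simp

/-- Measure-theoretic core of the slack-SCP generalization bound:
if `⟪θ,δ⟫ ≥ 0` a.s., `‖δ‖ ≤ B` a.s., `P(⟪θ,δ⟫ > γ) ≤ ε`, and
`E[1_M ⟪θ,δ⟫²] ≥ λ‖θ‖² P(M)`, then
`P(M) ≤ ε B² / λ + γ² / (λ ‖θ‖²)`. -/
theorem action_mismatch_le_of_covariance_diversity_slack
    {Ω : Type*} [MeasurableSpace Ω] (P : Measure Ω) [IsProbabilityMeasure P]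
    {d : ℕ} (hd : 1 ≤ d)
    (δ : Ω → EuclideanSpace ℝ (Fin d)) (hδ : Measurable δ)
    (θ : EuclideanSpace ℝ (Fin d)) (hθ : θ ≠ 0)
    (B lam γ ε : ℝ) (hB : 0 < B) (hlam : 0 < lam) (hγ : 0 ≤ γ)
    (hε0 : 0 ≤ ε) (hε1 : ε ≤ 1)
    (M : Set Ω) (hM : MeasurableSet M)
    (h1 : ∀ᵐ ω ∂P, 0 ≤ (inner ℝ θ (δ ω) : ℝ))
    (h2 : ∀ᵐ ω ∂P, ‖δ ω‖ ≤ B)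
    (h3 : (P {ω | γ < (inner ℝ θ (δ ω) : ℝ)}).toReal ≤ ε)
    (h4 : lam * ‖θ‖ ^ 2 * (P M).toReal ≤ ∫ ω in M, (inner ℝ θ (δ ω) : ℝ) ^ 2 ∂P) :
    (P M).toReal ≤ ε * B ^ 2 / lam + γ ^ 2 / (lam * ‖θ‖ ^ 2) :=
  action_mismatch_le_of_covariance_diversity_slack_general P δ hδ θ hθ B lam γ ε hlam M h1 h2 h3 h4
end

section
/- Let (Ω, ℱ, P) be a probability space, N and d integers with N ≥ d ≥ 1, and X : Ω → ℝ a random variable with 0 ≤ X ≤ 1 almost surely. Assume that for every ε ∈ (0,1], P(X > ε) ≤ Σ_{i=0}^{d-1} C(N,i) ε^i (1−ε)^{N−i}. Then E[X] ≤ d/(N+1). -/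
/-! By the layer-cake formula, `E[X] = ∫₀¹ P(X > ε) dε` for `X ∈ [0,1]`. Bounding the integrand by
the binomial lower tail and integrating term by term with the Beta integral
`C(N,i) ∫₀¹ εⁱ (1-ε)^(N-i) dε = C(N,i) i! (N-i)! / (N+1)! = 1/(N+1)` gives `d/(N+1)`. -/

open MeasureTheory Set
open scoped Nat

theorem integral_pow_mul_one_sub_pow (i m : ℕ) :
    ∫ x in (0 : ℝ)..1, x ^ i * (1 - x) ^ m = (i ! * m ! / (i + m + 1)! : ℝ) := by
  apply Complex.ofReal_injective
  have hre (k : ℕ) : 0 < ((k : ℂ) + 1).re := by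
    simp only [Complex.add_re, Complex.natCast_re, Complex.one_re]
    positivity
  have hbeta := Complex.betaIntegral_eq_Gamma_mul_div (i + 1) (m + 1) (hre i) (hre m)
  rw [show (i + 1 : ℂ) + (m + 1) = ↑(i + m + 1) + 1 by push_cast; ring,
    Complex.Gamma_nat_eq_factorial, Complex.Gamma_nat_eq_factorial,
    Complex.Gamma_nat_eq_factorial, Complex.betaIntegral] at hbeta
  simp only [add_sub_cancel_right, Complex.cpow_natCast] at hbeta
  push_cast [← intervalIntegral.integral_ofReal]
  exact hbeta

theorem integral_choose_mul_pow_mul_one_sub_pow {n i : ℕ} (hi : i ≤ n) :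
    ∫ x in (0 : ℝ)..1, n.choose i * x ^ i * (1 - x) ^ (n - i) = 1 / (n + 1 : ℝ) := by
  simp_rw [mul_assoc, intervalIntegral.integral_const_mul, integral_pow_mul_one_sub_pow,
    Nat.add_sub_cancel' hi, Nat.cast_choose ℝ hi, Nat.factorial_succ]
  push_cast
  field_simp

theorem integral_sum_range_choose_mul_pow_mul_one_sub_pow {n d : ℕ} (hd : d ≤ n + 1) :
    ∫ x in (0 : ℝ)..1, ∑ i ∈ Finset.range d, n.choose i * x ^ i * (1 - x) ^ (n - i)
      = d / (n + 1 : ℝ) := by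
  rw [intervalIntegral.integral_finsetSum fun i _ =>
    (by fun_prop : Continuous _).intervalIntegrable _ _]
  rw [Finset.sum_congr rfl fun i hi => integral_choose_mul_pow_mul_one_sub_pow
    (Nat.le_of_lt_succ ((Finset.mem_range.mp hi).trans_le hd))]
  simp [div_eq_mul_inv]

section Tail

variable {Ω : Type*} [MeasurableSpace Ω] {μ : Measure Ω} [IsFiniteMeasure μ] {X : Ω → ℝ} {c : ℝ}

theorem integral_eq_intervalIntegral_measureReal_lt (hX : AEMeasurable X μ) (hc : 0 ≤ c)
    (h0 : 0 ≤ᵐ[μ] X) (hXc : ∀ᵐ ω ∂μ, X ω ≤ c) :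
    ∫ ω, X ω ∂μ = ∫ t in (0)..c, μ.real {ω | t < X ω} := by
  have hint : Integrable X μ := by
    refine Integrable.of_bound hX.aestronglyMeasurable c ?_
    filter_upwards [h0, hXc] with ω h0 hXc
    rwa [Real.norm_of_nonneg h0]
  rw [hint.integral_eq_integral_meas_lt h0, intervalIntegral.integral_of_le hc,
    setIntegral_eq_of_subset_of_forall_sdiff_eq_zero measurableSet_Ioi Ioc_subset_Ioi_self]
  rintro t ⟨ht0, htc⟩
  have hct : c < t := lt_of_not_ge fun htc' => htc ⟨ht0, htc'⟩
  have hnull : μ {ω | t < X ω} = 0 :=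
    measure_mono_null (fun ω (hω : t < X ω) => not_le.mpr (hct.trans hω)) (ae_iff.mp hXc)
  simp [Measure.real, hnull]

theorem integral_le_intervalIntegral_of_measureReal_lt_le (hX : AEMeasurable X μ) (hc : 0 ≤ c)
    (h0 : 0 ≤ᵐ[μ] X) (hXc : ∀ᵐ ω ∂μ, X ω ≤ c) {F : ℝ → ℝ} (hF : IntervalIntegrable F volume 0 c)
    (htail : ∀ t ∈ Ioc 0 c, μ.real {ω | t < X ω} ≤ F t) :
    ∫ ω, X ω ∂μ ≤ ∫ t in (0)..c, F t := by
  have htail_anti : Antitone fun t => μ.real {ω | t < X ω} :=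
    fun s t hst => measureReal_mono fun ω hω => hst.trans_lt hω
  rw [integral_eq_intervalIntegral_measureReal_lt hX hc h0 hXc]
  exact intervalIntegral.integral_mono_on_of_le_Ioo hc htail_anti.intervalIntegrable hF
    fun t ht => htail t (Ioo_subset_Ioc_self ht)

end Tail

theorem expected_mismatch_le_general
    {Ω : Type*} [MeasurableSpace Ω] (P : Measure Ω) [IsProbabilityMeasure P]
    (N d : ℕ) (hNd : d ≤ N)
    (X : Ω → ℝ) (hX : Measurable X)
    (h0 : ∀ᵐ ω ∂P, 0 ≤ X ω) (h1 : ∀ᵐ ω ∂P, X ω ≤ 1)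
    (htail : ∀ ε : ℝ, 0 < ε → ε ≤ 1 →
      (P {ω | ε < X ω}).toReal ≤
        ∑ i ∈ Finset.range d, (N.choose i : ℝ) * ε ^ i * (1 - ε) ^ (N - i)) :
    ∫ ω, X ω ∂P ≤ (d : ℝ) / ((N : ℝ) + 1) := by
  calc ∫ ω, X ω ∂P
      ≤ ∫ ε in (0)..1, ∑ i ∈ Finset.range d, (N.choose i : ℝ) * ε ^ i * (1 - ε) ^ (N - i) :=
        integral_le_intervalIntegral_of_measureReal_lt_le hX.aemeasurable zero_le_one h0 h1
          ((by fun_prop : Continuous _).intervalIntegrable _ _) fun ε hε => htail ε hε.1 hε.2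
    _ = d / (N + 1 : ℝ) := integral_sum_range_choose_mul_pow_mul_one_sub_pow (by omega)

/-- Expected mismatch probability for the incenter estimator: if a `[0,1]`-valued
random variable `X` has tail `P(X > ε)` bounded by the binomial lower tail
`Σ_{i=0}^{d-1} C(N,i) ε^i (1-ε)^{N-i}` for every `ε ∈ (0,1]`, then
`E[X] ≤ d/(N+1)`. -/
theorem expected_mismatch_le
    {Ω : Type*} [MeasurableSpace Ω] (P : Measure Ω) [IsProbabilityMeasure P]
    (N d : ℕ) (hd : 1 ≤ d) (hNd : d ≤ N)
    (X : Ω → ℝ) (hX : Measurable X)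
    (h0 : ∀ᵐ ω ∂P, 0 ≤ X ω) (h1 : ∀ᵐ ω ∂P, X ω ≤ 1)
    (htail : ∀ ε : ℝ, 0 < ε → ε ≤ 1 →
      (P {ω | ε < X ω}).toReal ≤
        ∑ i ∈ Finset.range d, (N.choose i : ℝ) * ε ^ i * (1 - ε) ^ (N - i)) :
    ∫ ω, X ω ∂P ≤ (d : ℝ) / ((N : ℝ) + 1) :=
  expected_mismatch_le_general P N d hNd X hX h0 h1 htail
end

section
/- Let ψ(s,(a₁,a₂)) := (a₁, a₂, s·a₂) ∈ ℝ³, let θ := (2,−2,6), and for s ∈ {0,1} let a*(s) := (1, 2s − 1) ∈ [−1,1]². Then for every s ∈ {0,1} and every a ∈ [−1,1]², the strict-margin (incenter) constraint holds: ⟨θ, ψ(s,a) − ψ(s,a*(s))⟩ ≤ −‖ψ(s,a) − ψ(s,a*(s))‖₂. -/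
/-! Since `‖d‖₂ ≤ ‖d‖₁`, it suffices to show `⟪θ, d⟫ ≤ -‖d‖₁` for `d = ψ(s,a) - ψ(s,a*(s))`.
On the box `[-1,1]²` every coordinate of `d` has a sign fixed by `s`, so `‖d‖₁` is linear in `a`
and the inequality becomes linear arithmetic. -/

theorem PiLp.norm_le_sum_norm {p : ENNReal} [Fact (1 ≤ p)] {ι : Type*} [Fintype ι] [DecidableEq ι]
    {β : ι → Type*} [∀ i, SeminormedAddCommGroup (β i)] (x : PiLp p β) :
    ‖x‖ ≤ ∑ i, ‖x i‖ := by
  have hx : x = ∑ i, PiLp.single p i (x i) := by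
    ext j
    simp [Finset.sum_apply]
  calc ‖x‖ = ‖∑ i, PiLp.single p i (x i)‖ := congrArg _ hx
    _ ≤ ∑ i, ‖PiLp.single p i (x i)‖ := norm_sum_le _ _
    _ = ∑ i, ‖x i‖ := by simp only [PiLp.norm_single]

/-- Appendix claim revisiting Example 1: with feature map
`ψ(s,(a₁,a₂)) = (a₁, a₂, s·a₂)` and `θ = (2,−2,6)`, the incenter (strict-margin)
constraint `⟪θ, ψ(s,a) − ψ(s,a*(s))⟫ ≤ −‖ψ(s,a) − ψ(s,a*(s))‖` holds for both
states `s ∈ {0,1}` and all actions `a ∈ [−1,1]²`, where `a*(s) = (1, 2s−1)`. -/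
theorem incenter_feasible_example
    (ψ : ℝ → ℝ × ℝ → EuclideanSpace ℝ (Fin 3))
    (hψ : ∀ s a, ψ s a = ![a.1, a.2, s * a.2])
    (θ : EuclideanSpace ℝ (Fin 3)) (hθ : θ = !₂[2, -2, 6]) :
    ∀ s : ℝ, s = 0 ∨ s = 1 →
      ∀ a ∈ Set.Icc (-1 : ℝ) 1 ×ˢ Set.Icc (-1 : ℝ) 1,
        (inner ℝ θ (ψ s a - ψ s (1, 2 * s - 1)) : ℝ) ≤
          -‖ψ s a - ψ s (1, 2 * s - 1)‖ := by
  rintro s hs a ⟨⟨ha₁, ha₁'⟩, ⟨ha₂, ha₂'⟩⟩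
  set d := ψ s a - ψ s (1, 2 * s - 1)
  have hd : ∀ i, d i = ![a.1 - 1, a.2 - (2 * s - 1), s * a.2 - s * (2 * s - 1)] i := by
    intro i
    fin_cases i <;> simp [d, hψ]
  have hinner : inner ℝ θ d = 2 * d 0 - 2 * d 1 + 6 * d 2 := by
    simp only [hθ, PiLp.inner_apply, RCLike.inner_apply, Real.ringHom_apply, Fin.sum_univ_three,
      Matrix.cons_val_zero, Matrix.cons_val_one, Matrix.cons_val]
    ring
  have hnorm : ‖d‖ ≤ |d 0| + |d 1| + |d 2| := by
    simpa [Fin.sum_univ_three] using PiLp.norm_le_sum_norm d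
  rw [hinner]
  refine le_neg.mpr (hnorm.trans ?_)
  have h₁ : |a.1 - 1| = -(a.1 - 1) := abs_of_nonpos (by linarith)
  simp only [hd, Matrix.cons_val_zero, Matrix.cons_val_one, Matrix.cons_val_two]
  rcases hs with rfl | rfl
  · have h₂ : |a.2 + 1| = a.2 + 1 := abs_of_nonneg (by linarith)
    norm_num [h₁, h₂]
    linarith
  · have h₂ : |a.2 - 1| = -(a.2 - 1) := abs_of_nonpos (by linarith)
    norm_num [h₁, h₂]
    linarith
end
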